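/- arXiv:1011.4980 — 3 statements merged into one kernel-verified Lean document; each statement's English description precedes it below -/
import Mathlib

section
/- Let M be a compact measure space with finite positive measure ω, let g : M → ℝ be a nonnegative continuous (integrable) function, and let F : ℝ → ℝ be a decreasing positive function. Then (∫_M g·F(g) dω)/(∫_M F(g) dω) ≤ (∫_M g dω)/(∫_M dω). If F is strictly decreasing, equality holds if and only if g is (almost everywhere) constant. -/
open MeasureTheory Metric Set
open scoped RealInnerProductSpace ENNReal NNReal

noncomputable section

abbrev Esp (n : ℕ) := EuclideanSpace ℝ (Fin n)

/-- Support function of a set, as a `1`-homogeneous function on `ℝⁿ`. -/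
def suppFn (n : ℕ) (K : Set (Esp n)) (x : Esp n) : ℝ :=
  sSup ((fun y => (inner ℝ y x : ℝ)) '' K)

/-- Polar (dual) body with respect to the origin. -/
def polarBody (n : ℕ) (K : Set (Esp n)) : Set (Esp n) :=
  {y | ∀ x ∈ K, (inner ℝ x y : ℝ) ≤ 1}

/-- Spherical Lebesgue (surface area) measure on the unit sphere `S^{n-1}`. -/
def sphMeas (n : ℕ) : Measure (sphere (0 : Esp n) 1) :=
  (volume : Measure (Esp n)).toSphere

/-- The Hessian of `f` as an endomorphism of `ℝⁿ` (via the gradient). -/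
def hessEndo (n : ℕ) (f : Esp n → ℝ) (u : Esp n) : Esp n →ₗ[ℝ] Esp n :=
  (fderiv ℝ (gradient f) u).toLinearMap

/-- Orthogonal rank-one map `v ↦ ⟪v,u⟫ u`. -/
def projLine (n : ℕ) (u : Esp n) : Esp n →ₗ[ℝ] Esp n :=
  LinearMap.smulRight (innerSL ℝ u).toLinearMap u

/-- For a `1`-homogeneous `f`, this is `det (∇̄² f + f·Id)` on the tangent space `u^⊥`:
the Hessian of the homogeneous extension kills `u`, and adding the rank-one map `projLine u`
contributes a factor `1` in the radial direction. -/
def sphHessDet (n : ℕ) (f : Esp n → ℝ) (u : Esp n) : ℝ :=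
  LinearMap.det (hessEndo n f u + projLine n u)

/-- A convex body of class `C²₊` containing the origin in its interior, together with a
function `κ` that is its Gauss curvature (as a function of the outer normal):
`1/κ = det(∇̄²h + h·Id)` with `h` the support function. -/
structure IsC2Body (n : ℕ) (K : Set (Esp n)) (κ : Esp n → ℝ) : Prop where
  conv : Convex ℝ K
  comp : IsCompact K
  int0 : (0 : Esp n) ∈ interior K
  smooth : ContDiffOn ℝ 2 (suppFn n K) {(0 : Esp n)}ᶜ
  gaussPos : ∀ u ∈ sphere (0 : Esp n) 1, 0 < κ u
  gauss : ∀ u ∈ sphere (0 : Esp n) 1, κ u * sphHessDet n (suppFn n K) u = 1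

/-- Centro-affine curvature `H = κ / h^{n+1}`. -/
def centroAff (n : ℕ) (h κ : Esp n → ℝ) (x : Esp n) : ℝ := κ x / h x ^ (n + 1)

/-- `L_p` affine surface area `Ω_p = ∫_{S^{n-1}} H^{p/(n+p)} (h/κ) dμ_{S^{n-1}}
  = ∫_{∂K} H^{p/(n+p)} dμ_{cK}`. -/
def OmegaP (n : ℕ) (p : ℝ) (h κ : Esp n → ℝ) : ℝ :=
  ∫ u : sphere (0 : Esp n) 1,
    (centroAff n h κ ↑u) ^ (p / ((n : ℝ) + p)) * (h ↑u / κ ↑u) ∂ (sphMeas n)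

/-- An ellipsoid centered at the origin. -/
def IsCenteredEllipsoid (n : ℕ) (K : Set (Esp n)) : Prop :=
  ∃ A : Esp n ≃ₗ[ℝ] Esp n, K = A '' closedBall (0 : Esp n) 1


/-- Andrews' generalized Hölder inequality (decreasing case): on a compact finite
measure space, the `F(g)`-weighted mean of `g` is at most the unweighted mean; for
strictly decreasing `F`, equality holds iff `g` is a.e. constant. -/
theorem andrews_generalized_holder_decreasing
    {M : Type*} [TopologicalSpace M] [CompactSpace M] [MeasurableSpace M] [BorelSpace M]
    (ω : Measure M) [IsFiniteMeasure ω] (hω : ω Set.univ ≠ 0)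
    (g : M → ℝ) (hgc : Continuous g) (hg0 : ∀ x, 0 ≤ g x)
    (F : ℝ → ℝ) (hF : Antitone F) (hFpos : ∀ x, 0 < F x) :
    (∫ x, g x * F (g x) ∂ω) / (∫ x, F (g x) ∂ω)
      ≤ (∫ x, g x ∂ω) / (ω Set.univ).toReal ∧
    (StrictAnti F →
      ((∫ x, g x * F (g x) ∂ω) / (∫ x, F (g x) ∂ω)
          = (∫ x, g x ∂ω) / (ω Set.univ).toReal
        ↔ ∃ c : ℝ, g =ᵐ[ω] fun _ => c)) := by
  have hV : 0 < (ω Set.univ).toReal := ENNReal.toReal_pos hω (measure_ne_top _ _)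
  set V := (ω Set.univ).toReal with hVdef
  have hne : Nonempty M := by
    by_contra h
    rw [not_nonempty_iff] at h
    exact hω (by simp [Set.univ_eq_empty_iff.2 h])
  obtain ⟨Cg, hCg⟩ : ∃ C, ∀ x, g x ≤ C := by
    obtain ⟨C, hC⟩ := (isCompact_range hgc).bddAbove
    exact ⟨C, fun x => hC ⟨x, rfl⟩⟩
  have hCg0 : 0 ≤ Cg := le_trans (hg0 (Classical.arbitrary M)) (hCg _)
  have hgm : Measurable g := hgc.measurable
  have hFm : Measurable F := hF.measurable
  have hig : Integrable g ω := by
    refine (integrable_const Cg).mono' hgm.aestronglyMeasurable ?_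
    filter_upwards with x
    rw [Real.norm_eq_abs, abs_of_nonneg (hg0 x)]; exact hCg x
  have hiF : Integrable (fun x => F (g x)) ω := by
    refine (integrable_const (F 0)).mono' (hFm.comp hgm).aestronglyMeasurable ?_
    filter_upwards with x
    rw [Real.norm_eq_abs, abs_of_pos (hFpos _)]; exact hF (hg0 x)
  have higF : Integrable (fun x => g x * F (g x)) ω := by
    refine (integrable_const (Cg * F 0)).mono'
      (hgm.mul (hFm.comp hgm)).aestronglyMeasurable ?_
    filter_upwards with x
    rw [Real.norm_eq_abs, abs_of_nonneg (mul_nonneg (hg0 x) (hFpos _).le)]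
    exact mul_le_mul (hCg x) (hF (hg0 x)) (hFpos _).le hCg0
  have hB : 0 < ∫ x, F (g x) ∂ω := by
    have h1 : (∫ _x : M, F Cg ∂ω) ≤ ∫ x, F (g x) ∂ω :=
      integral_mono (integrable_const _) hiF fun x => hF (hCg x)
    rw [integral_const, smul_eq_mul] at h1
    exact lt_of_lt_of_le (mul_pos hV (hFpos _)) h1
  -- product measure computation
  have I1 : Integrable (fun z : M × M => (g z.1 * F (g z.1)) * (1:ℝ)) (ω.prod ω) :=
    higF.mul_prod (integrable_const 1)
  have I2 : Integrable (fun z : M × M => (1:ℝ) * (g z.2 * F (g z.2))) (ω.prod ω) :=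
    (integrable_const (1:ℝ)).mul_prod higF
  have I3 : Integrable (fun z : M × M => g z.1 * F (g z.2)) (ω.prod ω) :=
    hig.mul_prod hiF
  have I4 : Integrable (fun z : M × M => F (g z.1) * g z.2) (ω.prod ω) :=
    hiF.mul_prod hig
  have e : ∀ z : M × M, (g z.1 - g z.2) * (F (g z.1) - F (g z.2)) =
      (g z.1 * F (g z.1)) * (1:ℝ) + (1:ℝ) * (g z.2 * F (g z.2))
        - g z.1 * F (g z.2) - F (g z.1) * g z.2 := by intro z; ring
  have hIh : Integrable (fun z : M × M =>
      (g z.1 - g z.2) * (F (g z.1) - F (g z.2))) (ω.prod ω) := by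
    have : (fun z : M × M => (g z.1 - g z.2) * (F (g z.1) - F (g z.2)))
        = fun z => (g z.1 * F (g z.1)) * (1:ℝ) + (1:ℝ) * (g z.2 * F (g z.2))
          - g z.1 * F (g z.2) - F (g z.1) * g z.2 := funext e
    rw [this]
    exact ((I1.add I2).sub I3).sub I4
  have key : (∫ z : M × M, (g z.1 - g z.2) * (F (g z.1) - F (g z.2)) ∂(ω.prod ω))
      = 2 * ((∫ x, g x * F (g x) ∂ω) * V - (∫ x, g x ∂ω) * (∫ x, F (g x) ∂ω)) := by
    rw [integral_congr_ae (Filter.Eventually.of_forall e),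
      integral_sub (by exact (I1.add I2).sub I3) I4,
      integral_sub (by exact I1.add I2) I3,
      integral_add I1 I2,
      integral_prod_mul (f := fun x => g x * F (g x)) (g := fun _ => (1:ℝ)),
      integral_prod_mul (f := fun _ => (1:ℝ)) (g := fun x => g x * F (g x)),
      integral_prod_mul (f := fun x => g x) (g := fun x => F (g x)),
      integral_prod_mul (f := fun x => F (g x)) (g := fun x => g x),
      integral_const, smul_eq_mul, measureReal_def, ← hVdef]
    ring
  have hptle : ∀ z : M × M, (g z.1 - g z.2) * (F (g z.1) - F (g z.2)) ≤ 0 := by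
    intro z
    rcases le_total (g z.1) (g z.2) with h | h
    · exact mul_nonpos_of_nonpos_of_nonneg (sub_nonpos.2 h) (sub_nonneg.2 (hF h))
    · exact mul_nonpos_of_nonneg_of_nonpos (sub_nonneg.2 h) (sub_nonpos.2 (hF h))
  have hle : (∫ x, g x * F (g x) ∂ω) * V ≤ (∫ x, g x ∂ω) * (∫ x, F (g x) ∂ω) := by
    have := integral_nonpos (μ := ω.prod ω) (f := fun z : M × M =>
      (g z.1 - g z.2) * (F (g z.1) - F (g z.2))) hptle
    rw [key] at this; linarith
  constructor
  · rw [div_le_div_iff₀ hB hV]; exact hle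
  · intro hSA
    constructor
    · intro heq
      rw [div_eq_div_iff hB.ne' hV.ne'] at heq
      have hzero : (∫ z : M × M, (g z.1 - g z.2) * (F (g z.1) - F (g z.2)) ∂(ω.prod ω)) = 0 := by
        rw [key]; linarith
      have hae0 : (fun z : M × M => -((g z.1 - g z.2) * (F (g z.1) - F (g z.2))))
          =ᵐ[ω.prod ω] 0 := by
        rw [← integral_eq_zero_iff_of_nonneg (fun z => neg_nonneg.2 (hptle z)) hIh.neg]
        rw [integral_neg, hzero, neg_zero]
      have haeeq : ∀ᵐ z : M × M ∂(ω.prod ω), g z.1 = g z.2 := by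
        filter_upwards [hae0] with z hz
        simp only [Pi.zero_apply, neg_eq_zero] at hz
        by_contra hne'
        rcases lt_or_gt_of_ne hne' with h | h
        · exact absurd hz (ne_of_lt (mul_neg_of_neg_of_pos (sub_neg.2 h)
            (sub_pos.2 (hSA h))))
        · exact absurd hz (ne_of_lt (mul_neg_of_pos_of_neg (sub_pos.2 h)
            (sub_neg.2 (hSA h))))
      have hne0 : ω ≠ 0 := by
        intro h; exact hω (by simp [h])
      have : (ae ω).NeBot := ae_neBot.2 hne0
      obtain ⟨x₀, hx₀⟩ := (Measure.ae_ae_of_ae_prod haeeq).exists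
      exact ⟨g x₀, hx₀.mono fun y hy => hy.symm⟩
    · rintro ⟨c, hc⟩
      have hA : (∫ x, g x * F (g x) ∂ω) = V * (c * F c) := by
        rw [integral_congr_ae (μ := ω) (g := fun _ => c * F c)
          (hc.mono fun x hx => by rw [hx]), integral_const, smul_eq_mul, measureReal_def, ← hVdef]
      have hC : (∫ x, g x ∂ω) = V * c := by
        rw [integral_congr_ae (μ := ω) (g := fun _ => c) hc, integral_const, smul_eq_mul, measureReal_def, ← hVdef]
      have hBc : (∫ x, F (g x) ∂ω) = V * F c := by
        rw [integral_congr_ae (μ := ω) (g := fun _ => F c)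
          (hc.mono fun x hx => by rw [hx]), integral_const, smul_eq_mul, measureReal_def, ← hVdef]
      have h1 : F c ≠ 0 := (hFpos c).ne'
      have h2 : V ≠ 0 := hV.ne'
      rw [hA, hC, hBc]
      field_simp
end
end

section
/- Let M be a compact measure space with finite positive measure ω, let g : M → ℝ be a nonnegative integrable function, and let F : ℝ → ℝ be an increasing positive function. Then (∫_M g·F(g) dω)/(∫_M F(g) dω) ≥ (∫_M g dω)/(∫_M dω), with equality for strictly increasing F if and only if g is almost everywhere constant. -/
open MeasureTheory Metric Set
open scoped RealInnerProductSpace ENNReal NNReal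

noncomputable section

/-- Andrews' generalized Hölder inequality (increasing case): on a compact finite
measure space, the `F(g)`-weighted mean of a nonnegative integrable `g` is at least
the unweighted mean; for strictly increasing `F`, equality holds iff `g` is a.e. constant. -/
theorem andrews_generalized_holder_increasing
    {M : Type*} [TopologicalSpace M] [CompactSpace M] [MeasurableSpace M] [BorelSpace M]
    (ω : Measure M) [IsFiniteMeasure ω] (hω : ω Set.univ ≠ 0)
    (g : M → ℝ) (hgi : Integrable g ω) (hg0 : ∀ x, 0 ≤ g x)
    (F : ℝ → ℝ) (hF : Monotone F) (hFpos : ∀ x, 0 < F x)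
    (hFgi : Integrable (fun x => F (g x)) ω)
    (hgFgi : Integrable (fun x => g x * F (g x)) ω) :
    (∫ x, g x * F (g x) ∂ω) / (∫ x, F (g x) ∂ω)
      ≥ (∫ x, g x ∂ω) / (ω Set.univ).toReal ∧
    (StrictMono F →
      ((∫ x, g x * F (g x) ∂ω) / (∫ x, F (g x) ∂ω)
          = (∫ x, g x ∂ω) / (ω Set.univ).toReal
        ↔ ∃ c : ℝ, g =ᵐ[ω] fun _ => c)) := by
  set m : ℝ := (ω Set.univ).toReal with hm_def
  have hm : 0 < m := ENNReal.toReal_pos hω (measure_ne_top ω _)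
  set A : ℝ := ∫ x, g x * F (g x) ∂ω with hA_def
  set B : ℝ := ∫ x, g x ∂ω with hB_def
  set C : ℝ := ∫ x, F (g x) ∂ω with hC_def
  have hωne : ω ≠ 0 := by
    simpa using (Measure.measure_univ_ne_zero).1 hω
  have hC : 0 < C := by
    rw [hC_def]
    rw [integral_pos_iff_support_of_nonneg_ae
      (Filter.Eventually.of_forall fun x => (hFpos (g x)).le) hFgi]
    have : Function.support (fun x => F (g x)) = Set.univ := by
      ext x; simp [Function.mem_support, (hFpos (g x)).ne']
    rw [this]
    exact hω.bot_lt
  -- the Chebyshev kernel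
  set K : M × M → ℝ := fun z => (g z.1 - g z.2) * (F (g z.1) - F (g z.2)) with hK_def
  have hK0 : ∀ z, 0 ≤ K z := by
    intro z
    rcases le_total (g z.2) (g z.1) with h | h
    · exact mul_nonneg (sub_nonneg.2 h) (sub_nonneg.2 (hF h))
    · show 0 ≤ (g z.1 - g z.2) * (F (g z.1) - F (g z.2))
      nlinarith [sub_nonpos.2 h, sub_nonpos.2 (hF h)]
  have h1 : Integrable (fun z : M × M => (g z.1 * F (g z.1)) * (1 : ℝ)) (ω.prod ω) :=
    hgFgi.mul_prod (integrable_const 1)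
  have h2 : Integrable (fun z : M × M => g z.1 * F (g z.2)) (ω.prod ω) :=
    hgi.mul_prod hFgi
  have h3 : Integrable (fun z : M × M => F (g z.1) * g z.2) (ω.prod ω) :=
    hFgi.mul_prod hgi
  have h4 : Integrable (fun z : M × M => (1 : ℝ) * (g z.2 * F (g z.2))) (ω.prod ω) :=
    (integrable_const (1 : ℝ)).mul_prod hgFgi
  have hKeq : K = fun z : M × M =>
      ((g z.1 * F (g z.1)) * 1 - g z.1 * F (g z.2)) - (F (g z.1) * g z.2 - 1 * (g z.2 * F (g z.2))) := by
    funext z; simp only [hK_def]; ring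
  have hKint : Integrable K (ω.prod ω) := by
    rw [hKeq]; exact (h1.sub h2).sub (h3.sub h4)
  have hone : (∫ _ : M, (1 : ℝ) ∂ω) = m := by simp [hm_def, measureReal_def]
  have hKval : ∫ z, K z ∂(ω.prod ω) = (A * m - B * C) - (C * B - m * A) := by
    have p1 := integral_prod_mul (μ := ω) (ν := ω) (fun x => g x * F (g x)) (fun _ => (1 : ℝ))
    have p2 := integral_prod_mul (μ := ω) (ν := ω) g (fun x => F (g x))
    have p3 := integral_prod_mul (μ := ω) (ν := ω) (fun x => F (g x)) g
    have p4 := integral_prod_mul (μ := ω) (ν := ω) (fun _ => (1 : ℝ)) (fun x => g x * F (g x))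
    have e : ∫ z, K z ∂(ω.prod ω)
        = ∫ z : M × M, ((g z.1 * F (g z.1) * 1 - g z.1 * F (g z.2))
            - (F (g z.1) * g z.2 - 1 * (g z.2 * F (g z.2)))) ∂(ω.prod ω) := by
      refine integral_congr_ae (Filter.Eventually.of_forall fun z => ?_)
      simp only [hK_def]; ring
    have h12 : Integrable (fun z : M × M => g z.1 * F (g z.1) * 1 - g z.1 * F (g z.2))
        (ω.prod ω) := h1.sub h2
    have h34 : Integrable (fun z : M × M => F (g z.1) * g z.2 - 1 * (g z.2 * F (g z.2)))
        (ω.prod ω) := h3.sub h4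
    rw [e, integral_sub h12 h34, integral_sub h1 h2, integral_sub h3 h4, p1, p2, p3, p4, hone]
  have hKnn : 0 ≤ ∫ z, K z ∂(ω.prod ω) := integral_nonneg hK0
  have key : B * C ≤ A * m := by nlinarith [hKnn, hKval]
  constructor
  · rw [ge_iff_le, div_le_div_iff₀ hm hC]
    exact key
  · intro hSF
    constructor
    · intro heq
      have hAm : A * m = B * C := by
        have := (div_eq_div_iff hC.ne' hm.ne').1 heq
        linarith
      have hKzero : ∫ z, K z ∂(ω.prod ω) = 0 := by
        rw [hKval]; linarith
      have hKae : K =ᵐ[ω.prod ω] 0 :=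
        (integral_eq_zero_iff_of_nonneg_ae (Filter.Eventually.of_forall hK0) hKint).1 hKzero
      have hgg : ∀ᵐ x ∂ω, ∀ᵐ y ∂ω, g x = g y := by
        have := Measure.ae_ae_of_ae_prod hKae
        filter_upwards [this] with x hx
        filter_upwards [hx] with y hy
        by_contra hne
        rcases lt_or_gt_of_ne hne with h | h
        · have : 0 < K (x, y) :=
            mul_pos_of_neg_of_neg (sub_neg.2 h) (sub_neg.2 (hSF h))
          simp only [Pi.zero_apply] at hy
          linarith
        · have : 0 < K (x, y) :=
            mul_pos (sub_pos.2 h) (sub_pos.2 (hSF h))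
          simp only [Pi.zero_apply] at hy
          linarith
      haveI : (ae ω).NeBot := ae_neBot.2 hωne
      obtain ⟨x0, hx0⟩ := hgg.exists
      exact ⟨g x0, hx0.mono fun y hy => hy.symm⟩
    · rintro ⟨c, hc⟩
      have hB : B = c * m := by
        rw [hB_def, integral_congr_ae hc, integral_const]
        simp [hm_def, mul_comm, measureReal_def]
      have hCval : C = F c * m := by
        rw [hC_def, integral_congr_ae (hc.mono fun x hx => by rw [hx]), integral_const]
        simp [hm_def, mul_comm, measureReal_def]
      have hAval : A = c * F c * m := by
        rw [hA_def, integral_congr_ae (hc.mono fun x hx => by rw [hx]), integral_const]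
        simp [hm_def, measureReal_def]; ring
      rw [hAval, hCval, hB]
      have hf : F c ≠ 0 := (hFpos c).ne'
      field_simp
end
end

section
/- Let K be a C²₊ convex body in ℝⁿ containing the origin and let φ : (0,∞) → (0,∞) be continuous. Define h_t(u) = h_K(u) − t · h_K(u) · φ(H(u))/H(u) for the centro-affine curvature H = κ/h_K^{n+1}. Then (1/n) ∫_{S^{n-1}} h_t(u)^{-n} dμ_{S^{n-1}}(u) = Vol(K°) + t · ∫_{∂K} φ(H) dμ_{cK} + o(t) as t → 0⁺. -/
open MeasureTheory Metric Set
open scoped RealInnerProductSpace ENNReal NNReal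

noncomputable section

-- ==================== Auxiliary lemmas ====================

section Aux

variable {n : ℕ} {K : Set (Esp n)}

lemma bddAbove_inner_image (hK : IsCompact K) (x : Esp n) :
    BddAbove ((fun y => (inner ℝ y x : ℝ)) '' K) :=
  (hK.image (by exact Continuous.inner continuous_id continuous_const)).bddAbove

lemma suppFn_le_iff (hK : IsCompact K) (hne : K.Nonempty) (x : Esp n) (c : ℝ) :
    suppFn n K x ≤ c ↔ ∀ y ∈ K, (inner ℝ y x : ℝ) ≤ c := by
  rw [suppFn, csSup_le_iff (bddAbove_inner_image hK x) (hne.image _)]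
  simp

lemma le_suppFn (hK : IsCompact K) {y : Esp n} (hy : y ∈ K) (x : Esp n) :
    (inner ℝ y x : ℝ) ≤ suppFn n K x :=
  le_csSup (bddAbove_inner_image hK x) (mem_image_of_mem _ hy)

lemma suppFn_pos (hK : IsCompact K) (h0 : (0 : Esp n) ∈ interior K) {u : Esp n}
    (hu : u ∈ sphere (0 : Esp n) 1) : 0 < suppFn n K u := by
  obtain ⟨ε, hε, hβ⟩ := Metric.mem_nhds_iff.1 (mem_interior_iff_mem_nhds.1 h0)
  have hmem : (ε/2) • u ∈ K := by
    apply hβ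
    simp only [mem_ball_zero_iff, norm_smul, mem_sphere_zero_iff_norm.1 hu, mul_one,
      Real.norm_eq_abs, abs_of_pos (half_pos hε)]
    linarith
  have := le_suppFn hK hmem u
  rw [real_inner_smul_left, real_inner_self_eq_norm_sq, mem_sphere_zero_iff_norm.1 hu] at this
  nlinarith

lemma mem_polar_iff (hK : IsCompact K) (h0 : (0 : Esp n) ∈ interior K)
    (x : ({(0 : Esp n)}ᶜ : Set (Esp n))) :
    (x : Esp n) ∈ polarBody n K ↔ ‖(x : Esp n)‖ * suppFn n K (‖(x:Esp n)‖⁻¹ • (x:Esp n)) ≤ 1 := by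
  have hx : (x : Esp n) ≠ 0 := x.2
  have hr : (0:ℝ) < ‖(x:Esp n)‖ := norm_pos_iff.2 hx
  have hne : K.Nonempty := ⟨0, interior_subset h0⟩
  rw [mul_comm, ← le_div_iff₀ hr, ← inv_eq_one_div, suppFn_le_iff hK hne]
  show (∀ y ∈ K, (⟪y, (x:Esp n)⟫ : ℝ) ≤ 1) ↔ _
  apply forall₂_congr
  intro y hy
  rw [real_inner_smul_right]
  have hi : (0:ℝ) < ‖(x:Esp n)‖⁻¹ := inv_pos.2 hr
  constructor
  · intro h
    calc ‖(x:Esp n)‖⁻¹ * ⟪y, (x:Esp n)⟫ ≤ ‖(x:Esp n)‖⁻¹ * 1 :=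
        mul_le_mul_of_nonneg_left h hi.le
      _ = ‖(x:Esp n)‖⁻¹ := mul_one _
  · intro h
    have h2 := mul_le_mul_of_nonneg_left h hr.le
    rwa [← mul_assoc, mul_inv_cancel₀ hr.ne', one_mul] at h2

lemma nontriv (hn : 1 ≤ n) : Nontrivial (Esp n) :=
  Module.nontrivial_of_finrank_pos (R := ℝ)
    (by simp only [finrank_euclideanSpace_fin]; omega)

lemma suppFn_cont_sphere (hcont : ContinuousOn (suppFn n K) {(0:Esp n)}ᶜ) :
    Continuous fun u : sphere (0:Esp n) 1 => suppFn n K u :=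
  hcont.comp_continuous continuous_subtype_val
    fun u => ne_of_mem_sphere u.2 one_ne_zero

lemma polar_volume (hn : 1 ≤ n) (hK : IsCompact K) (h0 : (0:Esp n) ∈ interior K)
    (hcont : ContinuousOn (suppFn n K) {(0:Esp n)}ᶜ) :
    (volume (polarBody n K)).toReal =
      (1/(n:ℝ)) * ∫ u : sphere (0:Esp n) 1, (suppFn n K u) ^ (-(n:ℤ))
        ∂(volume : Measure (Esp n)).toSphere := by
  haveI : Nontrivial (Esp n) := nontriv hn
  set σ := (volume : Measure (Esp n)).toSphere with hσ
  have hdim : Module.finrank ℝ (Esp n) = n := finrank_euclideanSpace_fin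
  set ν := Measure.volumeIoiPow (Module.finrank ℝ (Esp n) - 1) with hν
  set hS : sphere (0:Esp n) 1 → ℝ := fun u => suppFn n K u with hhS
  have hScont : Continuous hS := suppFn_cont_sphere hcont
  have hpos : ∀ u, 0 < hS u := fun u => suppFn_pos hK h0 u.2
  set Sset : Set (sphere (0:Esp n) 1 × Ioi (0:ℝ)) := {p | p.2.1 * hS p.1 ≤ 1} with hSset
  have hSm : MeasurableSet Sset := by
    have : Continuous fun p : sphere (0:Esp n) 1 × Ioi (0:ℝ) => p.2.1 * hS p.1 :=
      (continuous_subtype_val.comp continuous_snd).mul (hScont.comp continuous_fst)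
    exact (isClosed_le this continuous_const).measurableSet
  have hpre : (homeomorphUnitSphereProd (Esp n)) ⁻¹' Sset
      = (Subtype.val ⁻¹' (polarBody n K) : Set ({(0:Esp n)}ᶜ : Set (Esp n))) := by
    ext x
    simp only [mem_preimage, hSset, mem_setOf_eq]
    rw [mem_polar_iff hK h0 x]
    simp [homeomorphUnitSphereProd_apply_fst_coe, homeomorphUnitSphereProd_apply_snd_coe, hhS]
  have hemb : MeasurableEmbedding (Subtype.val : ({(0:Esp n)}ᶜ : Set (Esp n)) → Esp n) :=
    MeasurableEmbedding.subtype_coe (measurableSet_singleton 0).compl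
  have key : volume (polarBody n K) = (σ.prod ν) Sset := by
    have h3 := ((volume : Measure (Esp n)).measurePreserving_homeomorphUnitSphereProd).measure_preimage
      hSm.nullMeasurableSet
    rw [hpre, hemb.comap_apply, Subtype.image_preimage_coe] at h3
    rw [← h3]
    rw [show ({(0:Esp n)}ᶜ ∩ polarBody n K) = polarBody n K \ {0} by
      rw [diff_eq, inter_comm]]
    exact (measure_diff_null (measure_singleton 0)).symm
  have slice : ∀ u : sphere (0:Esp n) 1, (Prod.mk u ⁻¹' Sset)
      = Iic (⟨(hS u)⁻¹, inv_pos.2 (hpos u)⟩ : Ioi (0:ℝ)) := by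
    intro u
    ext r
    simp only [mem_preimage, hSset, mem_setOf_eq, mem_Iic, ← Subtype.coe_le_coe]
    rw [inv_eq_one_div, le_div_iff₀ (hpos u)]
  have hν_singleton : ∀ x : Ioi (0:ℝ), ν {x} = 0 := by
    intro x
    refine (withDensity_absolutelyContinuous _ _) ?_
    rw [(MeasurableEmbedding.subtype_coe measurableSet_Ioi).comap_apply]
    simp
  have νIic : ∀ u : sphere (0:Esp n) 1,
      ν (Iic (⟨(hS u)⁻¹, inv_pos.2 (hpos u)⟩ : Ioi (0:ℝ)))
        = ENNReal.ofReal ((hS u)⁻¹ ^ n / n) := by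
    intro u
    have hae : (Iic (⟨(hS u)⁻¹, inv_pos.2 (hpos u)⟩ : Ioi (0:ℝ)))
        =ᵐ[ν] Iio (⟨(hS u)⁻¹, inv_pos.2 (hpos u)⟩ : Ioi (0:ℝ)) := by
      rw [Filter.eventuallyEq_set]
      have h0 : ν {(⟨(hS u)⁻¹, inv_pos.2 (hpos u)⟩ : Ioi (0:ℝ))} = 0 := hν_singleton _
      filter_upwards [measure_eq_zero_iff_ae_notMem.mp h0] with r hr
      simp only [mem_Iic, mem_Iio, mem_singleton_iff] at *
      constructor
      · intro h; exact lt_of_le_of_ne h hr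
      · exact le_of_lt
    rw [measure_congr hae, hν, Measure.volumeIoiPow_apply_Iio]
    have he : Module.finrank ℝ (Esp n) - 1 + 1 = n := by omega
    congr 1
    rw [he, hdim, Nat.cast_sub hn]
    push_cast
    ring_nf
  have key2 : volume (polarBody n K)
      = ∫⁻ u, ENNReal.ofReal ((hS u)⁻¹ ^ n / n) ∂σ := by
    rw [key, Measure.prod_apply hSm]
    congr 1
    ext u
    rw [slice u, νIic u]
  have hInt : ∫ u, ((hS u)⁻¹ ^ n / n) ∂σ
      = (∫⁻ u, ENNReal.ofReal ((hS u)⁻¹ ^ n / n) ∂σ).toReal := by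
    refine integral_eq_lintegral_of_nonneg_ae
      (ae_of_all _ fun u => by have := (hpos u).le; positivity) ?_
    exact (Continuous.aestronglyMeasurable
      (((hScont.inv₀ fun u => (hpos u).ne').pow n).div_const _))
  rw [key2, ← hInt]
  rw [← integral_const_mul]
  apply integral_congr_ae
  filter_upwards with u
  have := hpos u
  rw [zpow_neg, zpow_natCast, ← inv_pow]
  ring

def dualE (n : ℕ) : StrongDual ℝ (Esp n) ≃ₗᵢ[ℝ] Esp n :=
  (InnerProductSpace.toDual ℝ (Esp n)).symm

lemma sphHessDet_cont {f : Esp n → ℝ} (hf : ContDiffOn ℝ 2 f {(0:Esp n)}ᶜ) :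
    ContinuousOn (sphHessDet n f) {(0:Esp n)}ᶜ := by
  have hop : IsOpen ({(0:Esp n)}ᶜ) := isOpen_compl_singleton
  have hg : ContDiffOn ℝ 1 (fderiv ℝ f) {(0:Esp n)}ᶜ :=
    hf.fderiv_of_isOpen hop le_rfl
  have hc : ContinuousOn (fun u => fderiv ℝ (fderiv ℝ f) u) {(0:Esp n)}ᶜ :=
    hg.continuousOn_fderiv_of_isOpen hop le_rfl
  have hgradf : ∀ u : Esp n, fderiv ℝ (gradient f) u =
      ((dualE n).toContinuousLinearEquiv.toContinuousLinearMap).comp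
        (fderiv ℝ (fderiv ℝ f) u) := by
    intro u
    have h1 : gradient f = (dualE n) ∘ (fderiv ℝ f) := rfl
    rw [h1, LinearIsometryEquiv.comp_fderiv]
  have heq : ∀ u : Esp n, sphHessDet n f u =
      ContinuousLinearMap.det
        ((((dualE n).toContinuousLinearEquiv.toContinuousLinearMap).comp
          (fderiv ℝ (fderiv ℝ f) u)) + (innerSL ℝ u).smulRight u) := by
    intro u
    rw [sphHessDet, hessEndo, hgradf u]
    rfl
  have hcont : ContinuousOn (fun u : Esp n =>
      ((((dualE n).toContinuousLinearEquiv.toContinuousLinearMap).comp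
        (fderiv ℝ (fderiv ℝ f) u)) + (innerSL ℝ u).smulRight u)) {(0:Esp n)}ᶜ := by
    apply ContinuousOn.add
    · exact (continuousOn_const).clm_comp hc
    · apply Continuous.continuousOn
      exact ((ContinuousLinearMap.smulRightL ℝ (Esp n) (Esp n)).continuous₂).comp
        ((innerSL ℝ).continuous.prodMk continuous_id)
  exact (ContinuousLinearMap.continuous_det.comp_continuousOn hcont).congr fun u _ => heq u

lemma taylor_bound (n : ℕ) {m B t a b : ℝ} (hm : 0 < m) (ht : 0 ≤ t)
    (ha : m ≤ a) (hb : 0 ≤ b) (hbB : b ≤ B) (htB : t * B ≤ m / 2) :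
    |(a - t*b) ^ (-(n:ℤ)) - a ^ (-(n:ℤ)) - t * ((n:ℝ) * b * a ^ (-(n:ℤ)-1))|
      ≤ ((n:ℝ) * ((n:ℝ)+1) * B^2 * (m/2) ^ (-(n:ℤ)-2)) * t^2 := by
  have hB : 0 ≤ B := le_trans hb hbB
  have hglb : ∀ s ∈ Icc (0:ℝ) t, m/2 ≤ a - s*b := by
    intro s hs
    have h1 : s * b ≤ t * B :=
      mul_le_mul hs.2 hbB hb (le_trans hs.1 hs.2)
    nlinarith [hs.1]
  have hgpos : ∀ s ∈ Icc (0:ℝ) t, 0 < a - s*b :=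
    fun s hs => lt_of_lt_of_le (half_pos hm) (hglb s hs)
  set f : ℝ → ℝ := fun s => (a - s*b) ^ (-(n:ℤ)) with hf
  set f' : ℝ → ℝ := fun s => (n:ℝ) * b * (a - s*b) ^ (-(n:ℤ)-1) with hf'
  set f2 : ℝ → ℝ := fun s => (n:ℝ) * ((n:ℝ)+1) * b^2 * (a - s*b) ^ (-(n:ℤ)-2) with hf2
  have hlin : ∀ s : ℝ, HasDerivAt (fun s : ℝ => a - s * b) (-b) s := by
    intro s
    exact ((hasDerivAt_const s a).sub ((hasDerivAt_id s).mul_const b)).congr_deriv (by simp)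
  have hder : ∀ s ∈ Icc (0:ℝ) t, HasDerivAt f (f' s) s := by
    intro s hs
    have h0 : a - s*b ≠ 0 := (hgpos s hs).ne'
    have := (hasDerivAt_zpow (-(n:ℤ)) _ (Or.inl h0)).comp s (hlin s)
    refine this.congr_deriv ?_
    show _ = (n:ℝ) * b * (a - s*b) ^ (-(n:ℤ)-1)
    push_cast
    ring
  have hder' : ∀ s ∈ Icc (0:ℝ) t, HasDerivAt f' (f2 s) s := by
    intro s hs
    have h0 : a - s*b ≠ 0 := (hgpos s hs).ne'
    have := ((hasDerivAt_zpow (-(n:ℤ)-1) _ (Or.inl h0)).comp s (hlin s)).const_mul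
      ((n:ℝ) * b)
    refine this.congr_deriv ?_
    show _ = (n:ℝ) * ((n:ℝ)+1) * b^2 * (a - s*b) ^ (-(n:ℤ)-2)
    have hexp : -(n:ℤ)-1-1 = -(n:ℤ)-2 := by ring
    rw [hexp]
    push_cast
    ring
  set C : ℝ := (n:ℝ) * ((n:ℝ)+1) * B^2 * (m/2) ^ (-(n:ℤ)-2) with hC
  have hCnn : 0 ≤ C := by
    have : (0:ℝ) < (m/2) ^ (-(n:ℤ)-2) := zpow_pos (half_pos hm) _
    positivity
  have hbnd2 : ∀ s ∈ Icc (0:ℝ) t, ‖f2 s‖ ≤ C := by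
    intro s hs
    have h1 : 0 < a - s*b := hgpos s hs
    have h2 : (a - s*b) ^ (-(n:ℤ)-2) ≤ (m/2) ^ (-(n:ℤ)-2) := by
      rw [show -(n:ℤ)-2 = -((n+2:ℕ):ℤ) by push_cast; ring, zpow_neg, zpow_neg,
        zpow_natCast, zpow_natCast]
      exact inv_anti₀ (pow_pos (half_pos hm) _)
        (pow_le_pow_left₀ (half_pos hm).le (hglb s hs) _)
    have h3 : (0:ℝ) < (a - s*b) ^ (-(n:ℤ)-2) := zpow_pos h1 _
    rw [Real.norm_eq_abs, hf2, abs_of_nonneg (by positivity)]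
    have hb2 : b^2 ≤ B^2 := by nlinarith
    calc (n:ℝ) * ((n:ℝ)+1) * b^2 * (a - s*b) ^ (-(n:ℤ)-2)
        ≤ (n:ℝ) * ((n:ℝ)+1) * B^2 * (a - s*b) ^ (-(n:ℤ)-2) := by
          apply mul_le_mul_of_nonneg_right _ h3.le
          have : (0:ℝ) ≤ (n:ℝ) * ((n:ℝ)+1) := by positivity
          nlinarith
      _ ≤ C := by
          rw [hC]
          apply mul_le_mul_of_nonneg_left h2
          positivity
  have hstepA : ∀ s ∈ Icc (0:ℝ) t, ‖f' s - f' 0‖ ≤ C * s := by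
    intro s hs
    have := (convex_Icc (0:ℝ) t).norm_image_sub_le_of_norm_hasDerivWithin_le
      (fun x hx => (hder' x hx).hasDerivWithinAt) hbnd2 (left_mem_Icc.2 ht) hs
    simpa [Real.norm_eq_abs, abs_of_nonneg hs.1] using this
  set F : ℝ → ℝ := fun s => f s - s * f' 0 with hF
  have hFd : ∀ s ∈ Icc (0:ℝ) t, HasDerivAt F (f' s - f' 0) s := by
    intro s hs
    exact ((hder s hs).sub ((hasDerivAt_id s).mul_const (f' 0))).congr_deriv (by simp)
  have hFb : ∀ s ∈ Icc (0:ℝ) t, ‖f' s - f' 0‖ ≤ C * t := by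
    intro s hs
    exact le_trans (hstepA s hs) (mul_le_mul_of_nonneg_left hs.2 hCnn)
  have hkey := (convex_Icc (0:ℝ) t).norm_image_sub_le_of_norm_hasDerivWithin_le
    (fun x hx => (hFd x hx).hasDerivWithinAt) hFb (left_mem_Icc.2 ht) (right_mem_Icc.2 ht)
  have hf'0 : f' 0 = (n:ℝ) * b * a ^ (-(n:ℤ)-1) := by simp [hf']
  simp only [sub_zero, zero_mul, Real.norm_eq_abs] at hkey
  have heq2 : (a - t*b) ^ (-(n:ℤ)) - a ^ (-(n:ℤ)) - t * ((n:ℝ) * b * a ^ (-(n:ℤ)-1))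
      = (f t - t * f' 0) - (f 0 - 0 * f' 0) := by
    simp only [hf, hf'0, zero_mul, mul_zero, sub_zero]
    ring_nf
  rw [heq2]
  calc |(f t - t * f' 0) - (f 0 - 0 * f' 0)| ≤ C * t * |t| := hkey
    _ = C * t^2 := by rw [abs_of_nonneg ht]; ring

end Aux

open Asymptotics in
/-- First-order expansion of the polar volume along the `L_φ` deformation
`h_t = h_K − t·h_K·φ(H)/H`: the derivative at `t = 0⁺` is `Ω_φ(K) = ∫_{∂K} φ(H) dμ_{cK}`. -/
theorem Lphi_polar_volume_expansion (n : ℕ) (hn : 1 ≤ n) (K : Set (Esp n))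
    (κ : Esp n → ℝ) (hK : IsC2Body n K κ)
    (φ : ℝ → ℝ) (hφc : ContinuousOn φ (Set.Ioi 0)) (hφp : ∀ x > (0 : ℝ), 0 < φ x) :
    (fun t : ℝ =>
        (1 / (n : ℝ)) *
          (∫ u : sphere (0 : Esp n) 1,
            (suppFn n K ↑u -
              t * (suppFn n K ↑u * φ (centroAff n (suppFn n K) κ ↑u) /
                centroAff n (suppFn n K) κ ↑u)) ^ (-(n : ℤ)) ∂ sphMeas n)
          - ((volume (polarBody n K)).toReal +
              t * ∫ u : sphere (0 : Esp n) 1,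
                φ (centroAff n (suppFn n K) κ ↑u) * (suppFn n K ↑u / κ ↑u) ∂ sphMeas n))
      =o[nhdsWithin 0 (Set.Ioi 0)] fun t => t := by
  haveI : Nontrivial (Esp n) := nontriv hn
  haveI : IsFiniteMeasure (sphMeas n) := by unfold sphMeas; infer_instance
  haveI : Nonempty (sphere (0:Esp n) 1) :=
    (NormedSpace.sphere_nonempty.mpr zero_le_one).to_subtype
  have hnR : (0:ℝ) < n := by exact_mod_cast hn
  set hS : sphere (0:Esp n) 1 → ℝ := fun u => suppFn n K u with hhS
  have hScont : Continuous hS := suppFn_cont_sphere hK.smooth.continuousOn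
  have hSpos : ∀ u, 0 < hS u := fun u => suppFn_pos hK.comp hK.int0 u.2
  set DS : sphere (0:Esp n) 1 → ℝ := fun u => sphHessDet n (suppFn n K) u with hDS
  have hDcont : Continuous DS :=
    (sphHessDet_cont hK.smooth).comp_continuous continuous_subtype_val
      fun u => ne_of_mem_sphere u.2 one_ne_zero
  have hκeq : ∀ u : sphere (0:Esp n) 1, κ u = (DS u)⁻¹ :=
    fun u => eq_inv_of_mul_eq_one_left (hK.gauss u u.2)
  have hDpos : ∀ u, 0 < DS u := by
    intro u
    have h1 := hK.gauss u u.2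
    have h2 := hK.gaussPos u u.2
    nlinarith
  set HS : sphere (0:Esp n) 1 → ℝ := fun u => (DS u)⁻¹ / hS u ^ (n+1) with hHS
  have hHpos : ∀ u, 0 < HS u := fun u => by
    have := hSpos u; have := hDpos u; positivity
  have hHcont : Continuous HS :=
    (hDcont.inv₀ fun u => (hDpos u).ne').div (hScont.pow _)
      fun u => (pow_pos (hSpos u) _).ne'
  have hHeq : ∀ u : sphere (0:Esp n) 1,
      centroAff n (suppFn n K) κ ↑u = HS u := by
    intro u
    rw [centroAff, hκeq u]
  set φS : sphere (0:Esp n) 1 → ℝ := fun u => φ (HS u) with hφS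
  have hφcont : Continuous φS :=
    hφc.comp_continuous hHcont fun u => mem_Ioi.2 (hHpos u)
  have hφpos : ∀ u, 0 < φS u := fun u => hφp _ (hHpos u)
  set cS : sphere (0:Esp n) 1 → ℝ := fun u => hS u * φS u / HS u with hcS
  have hccont : Continuous cS :=
    ((hScont.mul hφcont).div hHcont fun u => (hHpos u).ne')
  have hcpos : ∀ u, 0 < cS u := fun u => by
    have := hSpos u; have := hφpos u; have := hHpos u; positivity
  set gS : sphere (0:Esp n) 1 → ℝ := fun u => (n:ℝ) * cS u * hS u ^ (-(n:ℤ)-1) with hgS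
  have hgcont : Continuous gS :=
    (continuous_const.mul hccont).mul
      (hScont.zpow₀ _ fun u => Or.inl (hSpos u).ne')
  -- constants
  obtain ⟨u₀, hu₀⟩ := hScont.exists_forall_le' (Classical.arbitrary _)
    (by rw [Filter.cocompact_eq_bot]; exact Filter.eventually_bot)
  set m : ℝ := hS u₀ with hmdef
  have hmpos : 0 < m := hSpos u₀
  obtain ⟨u₁, hu₁⟩ := hccont.exists_forall_ge' (Classical.arbitrary _)
    (by rw [Filter.cocompact_eq_bot]; exact Filter.eventually_bot)
  set B : ℝ := cS u₁ with hBdef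
  have hBpos : 0 < B := lt_of_lt_of_le (hcpos u₁) (le_refl _)
  set t₀ : ℝ := (m/2)/B with ht₀def
  have ht₀pos : 0 < t₀ := div_pos (half_pos hmpos) hBpos
  have htB : ∀ t ∈ Icc (0:ℝ) t₀, t * B ≤ m / 2 := by
    intro t ht
    calc t * B ≤ t₀ * B := mul_le_mul_of_nonneg_right ht.2 hBpos.le
      _ = m / 2 := div_mul_cancel₀ _ hBpos.ne'
  have hlow : ∀ t ∈ Icc (0:ℝ) t₀, ∀ u, m/2 ≤ hS u - t * cS u := by
    intro t ht u
    have h1 : t * cS u ≤ t * B := mul_le_mul_of_nonneg_left (hu₁ u) ht.1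
    have h2 := htB t ht
    have h3 := hu₀ u
    linarith
  set C : ℝ := (n:ℝ) * ((n:ℝ)+1) * B^2 * (m/2) ^ (-(n:ℤ)-2) with hCdef
  -- rewrite Vol
  have hVol : (volume (polarBody n K)).toReal
      = (1/(n:ℝ)) * ∫ u : sphere (0:Esp n) 1, hS u ^ (-(n:ℤ)) ∂ sphMeas n := by
    rw [sphMeas]
    exact polar_volume hn hK.comp hK.int0 hK.smooth.continuousOn
  -- rewrite deformation integrand
  have hIeq : ∀ t : ℝ,
      (∫ u : sphere (0 : Esp n) 1,
        (suppFn n K ↑u - t * (suppFn n K ↑u * φ (centroAff n (suppFn n K) κ ↑u) /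
          centroAff n (suppFn n K) κ ↑u)) ^ (-(n : ℤ)) ∂ sphMeas n)
      = ∫ u : sphere (0:Esp n) 1, (hS u - t * cS u) ^ (-(n:ℤ)) ∂ sphMeas n := by
    intro t
    apply integral_congr_ae
    filter_upwards with u
    rw [hHeq u]
  -- rewrite Omega integrand
  have hΩeq : (∫ u : sphere (0 : Esp n) 1,
        φ (centroAff n (suppFn n K) κ ↑u) * (suppFn n K ↑u / κ ↑u) ∂ sphMeas n)
      = ∫ u : sphere (0:Esp n) 1, (1/(n:ℝ)) * gS u ∂ sphMeas n := by
    apply integral_congr_ae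
    filter_upwards with u
    rw [hHeq u, hκeq u]
    have h1 : hS u ≠ 0 := (hSpos u).ne'
    have h2 : DS u ≠ 0 := (hDpos u).ne'
    have h3 : HS u ≠ 0 := (hHpos u).ne'
    have hzp : hS u ^ (-(n:ℤ)-1) = (hS u ^ (n+1))⁻¹ := by
      rw [show -(n:ℤ)-1 = -((n+1:ℕ):ℤ) by push_cast; ring, zpow_neg, zpow_natCast]
    rw [hgS]
    show φS u * (hS u / (DS u)⁻¹)
      = 1/(n:ℝ) * ((n:ℝ) * cS u * hS u ^ (-(n:ℤ)-1))
    rw [hzp, hcS, hHS]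
    field_simp
  -- integrabilities
  have hIntA : ∀ t ∈ Icc (0:ℝ) t₀,
      Integrable (fun u : sphere (0:Esp n) 1 => (hS u - t * cS u) ^ (-(n:ℤ))) (sphMeas n) := by
    intro t ht
    have hc0 : Continuous fun u : sphere (0:Esp n) 1 => (hS u - t * cS u) ^ (-(n:ℤ)) := by
      refine (hScont.sub (continuous_const.mul hccont)).zpow₀ _ fun u => Or.inl ?_
      exact (lt_of_lt_of_le (half_pos hmpos) (hlow t ht u)).ne'
    exact hc0.integrable_of_hasCompactSupport (HasCompactSupport.of_compactSpace _)
  have hIntB : Integrable (fun u : sphere (0:Esp n) 1 => hS u ^ (-(n:ℤ))) (sphMeas n) :=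
    (hScont.zpow₀ _ fun u => Or.inl (hSpos u).ne').integrable_of_hasCompactSupport
      (HasCompactSupport.of_compactSpace _)
  have hIntG : Integrable gS (sphMeas n) :=
    hgcont.integrable_of_hasCompactSupport (HasCompactSupport.of_compactSpace _)
  -- the main function and eventual equality
  set E : ℝ → ℝ := fun t => (1/(n:ℝ)) *
    ∫ u : sphere (0:Esp n) 1,
      ((hS u - t * cS u) ^ (-(n:ℤ)) - hS u ^ (-(n:ℤ)) - t * gS u) ∂ sphMeas n with hE
  have hmem : Ioo (0:ℝ) t₀ ∈ nhdsWithin (0:ℝ) (Set.Ioi 0) :=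
    Ioo_mem_nhdsGT_of_mem ⟨le_refl 0, ht₀pos⟩
  have hev : (fun t : ℝ =>
      (1 / (n : ℝ)) *
        (∫ u : sphere (0 : Esp n) 1,
          (suppFn n K ↑u -
            t * (suppFn n K ↑u * φ (centroAff n (suppFn n K) κ ↑u) /
              centroAff n (suppFn n K) κ ↑u)) ^ (-(n : ℤ)) ∂ sphMeas n)
        - ((volume (polarBody n K)).toReal +
            t * ∫ u : sphere (0 : Esp n) 1,
              φ (centroAff n (suppFn n K) κ ↑u) * (suppFn n K ↑u / κ ↑u) ∂ sphMeas n))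
      =ᶠ[nhdsWithin (0:ℝ) (Set.Ioi 0)] E := by
    filter_upwards [hmem] with t ht
    have ht' : t ∈ Icc (0:ℝ) t₀ := ⟨ht.1.le, ht.2.le⟩
    rw [hIeq t, hVol, hΩeq, hE]
    have hsub : Integrable (fun u : sphere (0:Esp n) 1 =>
        (hS u - t * cS u) ^ (-(n:ℤ)) - hS u ^ (-(n:ℤ))) (sphMeas n) :=
      (hIntA t ht').sub hIntB
    beta_reduce
    rw [integral_sub hsub (hIntG.const_mul t), integral_sub (hIntA t ht') hIntB,
      integral_const_mul, integral_const_mul]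
    ring
  -- bigO bound
  have hbig : E =O[nhdsWithin (0:ℝ) (Set.Ioi 0)] fun t => t^2 := by
    apply Asymptotics.IsBigO.of_bound
      ((1/(n:ℝ)) * C * ((sphMeas n) Set.univ).toReal)
    filter_upwards [hmem] with t ht
    have ht' : t ∈ Icc (0:ℝ) t₀ := ⟨ht.1.le, ht.2.le⟩
    have hptw : ∀ u : sphere (0:Esp n) 1,
        ‖(hS u - t * cS u) ^ (-(n:ℤ)) - hS u ^ (-(n:ℤ)) - t * gS u‖ ≤ C * t^2 := by
      intro u
      rw [Real.norm_eq_abs, hgS]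
      exact taylor_bound n hmpos ht.1.le (hu₀ u) (hcpos u).le (hu₁ u) (htB t ht')
    have hnorm := norm_integral_le_of_norm_le_const (μ := sphMeas n)
      (C := C * t^2) (ae_of_all _ hptw)
    rw [hE]
    simp only [norm_mul, Real.norm_eq_abs]
    have h1n : |1/(n:ℝ)| = 1/(n:ℝ) := abs_of_pos (by positivity)
    rw [h1n]
    calc 1/(n:ℝ) * |∫ u : sphere (0:Esp n) 1,
          ((hS u - t * cS u) ^ (-(n:ℤ)) - hS u ^ (-(n:ℤ)) - t * gS u) ∂ sphMeas n|
        ≤ 1/(n:ℝ) * (C * t^2 * ((sphMeas n) Set.univ).toReal) := by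
          apply mul_le_mul_of_nonneg_left _ (by positivity)
          exact hnorm
      _ = 1/(n:ℝ) * C * ((sphMeas n) Set.univ).toReal * |t^2| := by
          rw [abs_of_nonneg (sq_nonneg t)]; ring
  -- t^2 = o(t)
  have hsmall : (fun t : ℝ => t^2) =o[nhdsWithin (0:ℝ) (Set.Ioi 0)] fun t => t := by
    have h3 : (fun t : ℝ => t) =o[nhdsWithin (0:ℝ) (Set.Ioi 0)] (fun _ => (1:ℝ)) :=
      (Asymptotics.isLittleO_one_iff ℝ).2 (Filter.Tendsto.mono_left Filter.tendsto_id nhdsWithin_le_nhds)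
    have h4 := h3.mul_isBigO (Asymptotics.isBigO_refl (fun t : ℝ => t)
      (nhdsWithin (0:ℝ) (Set.Ioi 0)))
    simpa [sq] using h4
  exact hev.trans_isLittleO (hbig.trans_isLittleO hsmall)

-- #print axioms check
end
end
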